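/- arXiv:1304.2999 — 2 statements merged into one kernel-verified Lean document; each statement's English description precedes it below -/
import Mathlib

section
/- Let {L_k}_{k=1}^K be K distinct d-dimensional linear subspaces of ℝ^D (d < D), and for each k let the data set contain N_k > d points sampled i.i.d. from a probability measure μ_k supported on L_k that assigns measure zero to every proper subspace of L_k. Define GD_True(Π) := ‖(dim span(Π₁),...,dim span(Π_m))‖_p for a partition Π of the data into m ≤ K sets. If p > ln(K)/(ln(d+1) − ln(d)), then almost surely the natural partition (grouping points by the subspace they were sampled from) is the unique minimizer of GD_True among all partitions into at most K sets. -/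
/-!
Almost surely the samples are in general position (`GeneralPosition`): each lies in its own
subspace, and a sample lies in the span of other samples only if that span contains its whole
subspace. Indeed, given the other samples, their span meets `L k` either in all of `L k` or in a
proper subspace, which is `μ k`-null.

In general position the `N k > d` samples from `L k` are dependent, so one of them lies in the span
of the others and together they span `L k`: the natural partition has `GD = K^{1/p} d`. Any other
partition into at most `K` sets has, by counting, a part with more than `d` points drawn from two
different subspaces. Its span has dimension at least `d + 1`: either these points are independent,
or the span contains some `L k` together with a point outside it. Finally `K d^p < (d + 1)^p` is
the hypothesis on `p`.
-/

open MeasureTheory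

section Partition

open Finset

variable {ι κ : Type*} [Fintype ι] [Fintype κ] [DecidableEq κ] {c π : ι → κ}

omit [Fintype ι] [DecidableEq κ] in
lemma eq_iff_eq_of_imp_of_surjective (hc : Function.Surjective c)
    (hπ : ∀ i j, π i = π j → c i = c j) (i j : ι) : π i = π j ↔ c i = c j := by
  choose r hr using hc
  have hπr : ∀ i, π i = π (r (c i)) := fun i => by
    have hr_inj : Function.Injective (π ∘ r) := fun k k' h =>
      (hr k).symm.trans ((hπ _ _ h).trans (hr k'))
    obtain ⟨k, hk⟩ := (Finite.injective_iff_surjective.1 hr_inj) (π i)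
    have hkc : k = c i := (hr k).symm.trans (hπ _ _ hk)
    rw [← hkc]
    exact hk.symm
  refine ⟨hπ i j, fun h => ?_⟩
  rw [hπr i, hπr j, h]

omit [Fintype κ] in
lemma surjective_of_forall_lt_card_fiber {d : ℕ} (hc : ∀ k, d < #{i | c i = k}) :
    Function.Surjective c := fun k => by
  obtain ⟨i, hi⟩ := card_pos.1 ((Nat.zero_le d).trans_lt (hc k))
  exact ⟨i, (mem_filter.1 hi).2⟩

omit [Fintype ι] in
lemma card_le_card_of_exists_pure_point (hc : Function.Surjective c) {M A : Finset κ}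
    (hM : ∀ i j, π i = π j → c i ≠ c j → π i ∈ M) (hA : ∀ k ∉ A, ∃ i, c i = k ∧ π i ∉ M) :
    #M ≤ #A := by
  have hex (k : κ) : ∃ i, c i = k ∧ (k ∉ A → π i ∉ M) := by
    by_cases hk : k ∈ A
    · obtain ⟨i, hi⟩ := hc k
      exact ⟨i, hi, fun h => (h hk).elim⟩
    · obtain ⟨i, hi, hiM⟩ := hA k hk
      exact ⟨i, hi, fun _ => hiM⟩
  choose r hrc hrM using hex
  have hcompl : #Aᶜ ≤ #Mᶜ := by
    refine card_le_card_of_injOn (fun k => π (r k))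
      (fun k hk => by simpa using hrM k (by simpa using hk)) fun k hk k' hk' h => ?_
    by_contra hne
    refine hrM k (by simpa using hk) (hM _ _ h ?_)
    rwa [hrc, hrc]
  rw [card_compl, card_compl] at hcompl
  have := card_le_univ M
  omega

lemma eq_of_eq_of_card_mixed_fiber_le {d : ℕ} (hc : ∀ k, d < #{i | c i = k})
    (hsmall : ∀ i j, π i = π j → c i ≠ c j → #{t | π t = π i} ≤ d) (i j : ι) :
    π i = π j → c i = c j := by
  classical
  set M : Finset κ := {l | ∃ i j, π i = l ∧ π j = l ∧ c i ≠ c j}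
  set A : Finset κ := {k | ∀ i, c i = k → π i ∈ M}
  have mem_M {i j} (hij : π i = π j) (hne : c i ≠ c j) : π i ∈ M := by
    simp only [M, mem_filter, mem_univ, true_and]
    exact ⟨i, j, rfl, hij.symm, hne⟩
  -- `(d + 1) #A ≤ #(points in mixed fibres) ≤ d #M ≤ d #A`, so no fibre is mixed.
  have hMA : #M ≤ #A := card_le_card_of_exists_pure_point
    (surjective_of_forall_lt_card_fiber hc) (fun _ _ => mem_M) fun k hk => by simpa [A] using hk
  have hA : (d + 1) * #A ≤ #{i | π i ∈ M} := calc
    (d + 1) * #A = ∑ _k ∈ A, (d + 1) := by rw [sum_const, smul_eq_mul, mul_comm]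
    _ ≤ ∑ k ∈ A, #{i | c i = k} := sum_le_sum fun k _ => hc k
    _ = #{i | c i ∈ A} := sum_card_fiberwise_eq_card_filter _ _ _
    _ ≤ #{i | π i ∈ M} := card_le_card fun i hi => by
      simp only [A, mem_filter, mem_univ, true_and] at hi ⊢
      exact hi i rfl
  have hM : #{i | π i ∈ M} ≤ d * #M := calc
    #{i | π i ∈ M} = ∑ l ∈ M, #{i | π i = l} := (sum_card_fiberwise_eq_card_filter _ _ _).symm
    _ ≤ ∑ _l ∈ M, d := sum_le_sum fun l hl => by
      obtain ⟨i, rfl, j, hj, hij⟩ := by simpa [M] using hl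
      exact hsmall i j hj.symm hij
    _ = d * #M := by rw [sum_const, smul_eq_mul, mul_comm]
  have hM0 : M = ∅ := card_eq_zero.1 (by nlinarith)
  intro hij
  by_contra hne
  simpa [hM0] using mem_M hij hne

lemma exists_large_mixed_fiber {d : ℕ} (hc : ∀ k, d < #{i | c i = k})
    (hπ : ¬ ∀ i j, π i = π j ↔ c i = c j) :
    ∃ i j, π i = π j ∧ c i ≠ c j ∧ d < #{t | π t = π i} := by
  by_contra! hsmall
  exact hπ (eq_iff_eq_of_imp_of_surjective (surjective_of_forall_lt_card_fiber hc)
    (eq_of_eq_of_card_mixed_fiber_le hc hsmall))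

end Partition

section LinearAlgebra

open Finset Submodule Module

lemma finrank_span_image_eq_card {ι 𝕜 V : Type*} [DivisionRing 𝕜] [AddCommGroup V] [Module 𝕜 V]
    {v : ι → V} {F : Finset ι} (h : LinearIndepOn 𝕜 v (F : Set ι)) :
    finrank 𝕜 (span 𝕜 (v '' F)) = #F := by
  rw [Set.image_eq_range, finrank_span_eq_card h]
  simp

structure GeneralPosition {ι 𝕜 V : Type*} [DivisionRing 𝕜] [AddCommGroup V] [Module 𝕜 V]
    (W : ι → Submodule 𝕜 V) (v : ι → V) : Prop where
  mem : ∀ i, v i ∈ W i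
  le_span_of_mem_span : ∀ i (S : Set ι), i ∉ S → v i ∈ span 𝕜 (v '' S) → W i ≤ span 𝕜 (v '' S)

namespace GeneralPosition

variable {ι 𝕜 V : Type*} [DivisionRing 𝕜] [AddCommGroup V] [Module 𝕜 V] {W : ι → Submodule 𝕜 V}
  {v : ι → V}

lemma exists_le_span_of_not_linearIndepOn (hv : GeneralPosition W v) {S : Set ι}
    (hS : ¬ LinearIndepOn 𝕜 v S) : ∃ i ∈ S, W i ≤ span 𝕜 (v '' S) := by
  obtain ⟨i, hiS, hi⟩ : ∃ i ∈ S, v i ∈ span 𝕜 (v '' (S \ {i})) := by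
    simpa [linearIndepOn_iff_notMem_span] using hS
  exact ⟨i, hiS, (hv.le_span_of_mem_span i _ (fun h => h.2 rfl) hi).trans
    (span_mono (Set.image_mono Set.sdiff_subset))⟩

variable [FiniteDimensional 𝕜 V] [Fintype ι] {κ : Type*} [DecidableEq κ] {L : κ → Submodule 𝕜 V}
  {c : ι → κ} {d : ℕ}

lemma span_image_fiber_eq (hv : GeneralPosition (fun i => L (c i)) v) {k : κ}
    (hLk : finrank 𝕜 (L k) = d) (hk : d < #{i | c i = k}) :
    span 𝕜 (v '' {i | c i = k}) = L k := by
  have hle : span 𝕜 (v '' {i | c i = k}) ≤ L k :=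
    span_le.2 (Set.image_subset_iff.2 fun i hi => hi ▸ hv.mem i)
  have hdep : ¬ LinearIndepOn 𝕜 v {i | c i = k} := fun hli => by
    have := finrank_mono hle
    rw [← coe_filter_univ, finrank_span_image_eq_card (by rwa [coe_filter_univ]), hLk] at this
    omega
  obtain ⟨i, rfl, hLi⟩ := hv.exists_le_span_of_not_linearIndepOn hdep
  exact hle.antisymm hLi

lemma eq_of_mem (hv : GeneralPosition (fun i => L (c i)) v) (hL : Function.Injective L)
    (hLd : ∀ k, finrank 𝕜 (L k) = d) (hN : ∀ k, d < #{i | c i = k}) {i : ι} {k : κ}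
    (h : v i ∈ L k) : c i = k := by
  by_contra hne
  rw [← hv.span_image_fiber_eq (hLd k) (hN k)] at h
  have hle := hv.le_span_of_mem_span i _ hne h
  rw [hv.span_image_fiber_eq (hLd k) (hN k)] at hle
  exact hne (hL (eq_of_le_of_finrank_eq hle (by rw [hLd, hLd])))

lemma lt_finrank_span_image (hv : GeneralPosition (fun i => L (c i)) v) (hL : Function.Injective L)
    (hLd : ∀ k, finrank 𝕜 (L k) = d) (hN : ∀ k, d < #{i | c i = k}) {F : Finset ι}
    (hF : d < #F) {i j : ι} (hi : i ∈ F) (hj : j ∈ F) (hij : c i ≠ c j) :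
    d < finrank 𝕜 (span 𝕜 (v '' F)) := by
  by_cases hli : LinearIndepOn 𝕜 v (F : Set ι)
  · rwa [finrank_span_image_eq_card hli]
  obtain ⟨s, hs, hle⟩ := hv.exists_le_span_of_not_linearIndepOn hli
  obtain ⟨t, ht, hts⟩ : ∃ t ∈ F, c t ≠ c s := by
    by_cases h : c i = c s
    · exact ⟨j, hj, fun h' => hij (h.trans h'.symm)⟩
    · exact ⟨i, hi, h⟩
  have hlt : L (c s) < span 𝕜 (v '' F) := lt_of_le_of_ne hle fun h =>
    hts (hv.eq_of_mem hL hLd hN (h ▸ subset_span (Set.mem_image_of_mem v ht)))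
  exact hLd (c s) ▸ finrank_lt_finrank_of_lt hlt

end GeneralPosition

end LinearAlgebra

section Probability

open Submodule

lemma measurePreserving_piCurry_symm {ι : Type*} [Fintype ι] {κ : ι → Type*} [∀ i, Fintype (κ i)]
    {X : (i : ι) → κ i → Type*} [∀ i j, MeasurableSpace (X i j)]
    (μ : (i : ι) → (j : κ i) → Measure (X i j)) [∀ i j, IsProbabilityMeasure (μ i j)] :
    MeasurePreserving (MeasurableEquiv.piCurry X).symm
      (Measure.pi fun i => Measure.pi fun j => μ i j)
      (Measure.pi fun p : (i : ι) × κ i => μ p.1 p.2) := by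
  refine ⟨(MeasurableEquiv.piCurry X).symm.measurable, ?_⟩
  simpa only [Measure.infinitePi_eq_pi] using Measure.infinitePi_map_piCurry_symm μ

lemma ae_pi_of_forall_ae_eval {ι : Type*} [Fintype ι] {α : ι → Type*} [∀ i, MeasurableSpace (α i)]
    {ν : ∀ i, Measure (α i)} [∀ i, IsProbabilityMeasure (ν i)] {S : Set ι} {i : ι} (hi : i ∉ S)
    {P : ((j : S) → α j) → α i → Prop}
    (hP : MeasurableSet {q : ((j : S) → α j) × α i | P q.1 q.2})
    (h : ∀ y, ∀ᵐ x ∂ν i, P y x) : ∀ᵐ v ∂Measure.pi ν, P (fun j : S => v j) (v i) := by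
  classical
  have hmeas : MeasurableSet
      {q : ((j : S) → α j) × ((j : {j // j ∉ S}) → α j) | P q.1 (q.2 ⟨i, hi⟩)} :=
    hP.preimage (f := fun q : ((j : S) → α j) × ((j : {j // j ∉ S}) → α j) => (q.1, q.2 ⟨i, hi⟩))
      (by fun_prop)
  refine (measurePreserving_piEquivPiSubtypeProd ν (· ∈ S)).quasiMeasurePreserving.ae
    (p := fun q : ((j : S) → α j) × ((j : {j // j ∉ S}) → α j) => P q.1 (q.2 ⟨i, hi⟩))
    ((Measure.ae_prod_iff_ae_ae hmeas).2 ?_)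
  exact ae_of_all _ fun y =>
    (measurePreserving_eval (fun j : {j // j ∉ S} => ν j) ⟨i, hi⟩).quasiMeasurePreserving.ae (h y)

lemma ae_notMem_of_not_le {𝕜 V : Type*} [DivisionRing 𝕜] [AddCommGroup V] [Module 𝕜 V]
    [MeasurableSpace V] {μ : Measure V} {W U : Submodule 𝕜 V} (hW : μ (W : Set V)ᶜ = 0)
    (hnull : ∀ U < W, μ U = 0) (h : ¬ W ≤ U) : ∀ᵐ x ∂μ, x ∉ U := by
  have hUW : μ ↑(U ⊓ W) = 0 :=
    hnull _ (lt_of_le_of_ne inf_le_right fun h' => h (h' ▸ inf_le_left))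
  filter_upwards [measure_eq_zero_iff_ae_notMem.1 hW, measure_eq_zero_iff_ae_notMem.1 hUW]
    with x hxW hx hxU
  exact hx ⟨hxU, not_not.1 hxW⟩

section Borel

variable {V : Type*} [NormedAddCommGroup V] [NormedSpace ℝ V] [FiniteDimensional ℝ V]
  [MeasurableSpace V] [BorelSpace V] {ι : Type*} [Finite ι]

lemma measurableSet_mem_span_range :
    MeasurableSet {q : (ι → V) × V | q.2 ∈ span ℝ (Set.range q.1)} := by
  cases nonempty_fintype ι
  have hrange : {q : (ι → V) × V | q.2 ∈ span ℝ (Set.range q.1)} =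
      Set.range fun a : (ι → ℝ) × (ι → V) => (a.2, ∑ i, a.1 i • a.2 i) := by
    ext ⟨y, x⟩
    simp [mem_span_range_iff_exists_fun]
  obtain ⟨K, hK, hKeq⟩ := isSigmaCompact_range
    (f := fun a : (ι → ℝ) × (ι → V) => (a.2, ∑ i, a.1 i • a.2 i)) (by fun_prop)
  rw [hrange, ← hKeq]
  exact MeasurableSet.iUnion fun n => (hK n).measurableSet

lemma measurableSet_le_span_range (W : Submodule ℝ V) :
    MeasurableSet {y : ι → V | W ≤ span ℝ (Set.range y)} := by
  obtain ⟨t, rfl⟩ := IsNoetherian.noetherian W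
  have : {y : ι → V | span ℝ ↑t ≤ span ℝ (Set.range y)} =
      ⋂ x ∈ t, {y | x ∈ span ℝ (Set.range y)} := by
    ext y
    simp [span_le, Set.subset_def]
  rw [this]
  exact Finset.measurableSet_biInter t fun x _ =>
    measurableSet_mem_span_range.preimage (measurable_id.prodMk measurable_const)

omit [Finite ι] in
lemma ae_generalPosition [Fintype ι] {ν : ι → Measure V} [∀ i, IsProbabilityMeasure (ν i)]
    {W : ι → Submodule ℝ V} (hW : ∀ i, ν i (W i : Set V)ᶜ = 0)
    (hnull : ∀ i, ∀ U < W i, ν i U = 0) : ∀ᵐ v ∂Measure.pi ν, GeneralPosition W v := by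
  have hmem : ∀ᵐ v ∂Measure.pi ν, ∀ i, v i ∈ W i := ae_all_iff.2 fun i =>
    (measurePreserving_eval ν i).quasiMeasurePreserving.ae
      ((measure_eq_zero_iff_ae_notMem.1 (hW i)).mono fun _ h => not_not.1 h)
  have hspan : ∀ᵐ v ∂Measure.pi ν, ∀ i (S : Set ι), i ∉ S → v i ∈ span ℝ (v '' S) →
      W i ≤ span ℝ (v '' S) := by
    refine ae_all_iff.2 fun i => ae_all_iff.2 fun S => ?_
    by_cases hi : i ∈ S
    · exact ae_of_all _ fun v h => (h hi).elim
    have hP : MeasurableSet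
        {q : (S → V) × V | q.2 ∈ span ℝ (Set.range q.1) → W i ≤ span ℝ (Set.range q.1)} :=
      measurableSet_mem_span_range.imp ((measurableSet_le_span_range (W i)).preimage measurable_fst)
    have hslice (y : S → V) :
        ∀ᵐ x ∂ν i, x ∈ span ℝ (Set.range y) → W i ≤ span ℝ (Set.range y) := by
      by_cases hle : W i ≤ span ℝ (Set.range y)
      · exact ae_of_all _ fun _ _ => hle
      · exact (ae_notMem_of_not_le (hW i) (hnull i) hle).mono fun x hx hx' => (hx hx').elim
    filter_upwards [ae_pi_of_forall_ae_eval (α := fun _ => V) (ν := ν) hi hP hslice] with v hv _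
    rw [Set.image_eq_range]
    exact hv
  filter_upwards [hmem, hspan] with v h1 h2 using ⟨h1, h2⟩

end Borel

end Probability

lemma mul_rpow_lt_add_one_rpow {K d p : ℝ} (hK : 0 ≤ K) (hd : 0 < d)
    (hp : Real.log K / (Real.log (d + 1) - Real.log d) < p) : K * d ^ p < (d + 1) ^ p := by
  rcases hK.eq_or_lt with rfl | hK
  · simpa using Real.rpow_pos_of_pos (by linarith) p
  have hden : 0 < Real.log (d + 1) - Real.log d := sub_pos.2 (Real.log_lt_log hd (by linarith))
  rw [div_lt_iff₀ hden] at hp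
  rw [← Real.log_lt_log_iff (by positivity) (by positivity), Real.log_mul hK.ne' (by positivity),
    Real.log_rpow hd, Real.log_rpow (by positivity)]
  linarith

lemma sum_rpow_rpow_inv_lt {κ : Type*} [Fintype κ] {p : ℝ} (hp : 0 < p) {a b : κ → ℝ}
    (ha : ∀ j, 0 ≤ a j) (hb : ∀ j, 0 ≤ b j) {j₀ : κ} (h : ∑ j, a j ^ p < b j₀ ^ p) :
    (∑ j, a j ^ p) ^ (1 / p) < (∑ j, b j ^ p) ^ (1 / p) :=
  Real.rpow_lt_rpow (Finset.sum_nonneg fun j _ => Real.rpow_nonneg (ha j) p)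
    (h.trans_le (Finset.single_le_sum (fun j _ => Real.rpow_nonneg (hb j) p) (Finset.mem_univ j₀)))
    (by positivity)

lemma card_filter_sigma_fst_eq {ι : Type*} [Fintype ι] [DecidableEq ι] {κ : ι → Type*}
    [∀ i, Fintype (κ i)] (i : ι) :
    (Finset.univ.filter fun s : (i : ι) × κ i => s.1 = i).card = Fintype.card (κ i) := by
  rw [← Fintype.card_subtype]
  exact Fintype.card_congr (Equiv.sigmaSubtype i)

theorem natural_partition_uniquely_minimizes_GD_general
    (D d K : ℕ) (hd : 1 ≤ d)
    (p : ℝ) (hp : p > Real.log K / (Real.log ((d : ℝ) + 1) - Real.log d))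
    (L : Fin K → Submodule ℝ (Fin D → ℝ)) (hLinj : Function.Injective L)
    (hLd : ∀ k, Module.finrank ℝ (L k) = d)
    (μ : Fin K → Measure (Fin D → ℝ)) [∀ k, IsProbabilityMeasure (μ k)]
    (hsupp : ∀ k, μ k (↑(L k))ᶜ = 0)
    (hnd : ∀ (k : Fin K) (S : Submodule ℝ (Fin D → ℝ)), S < L k → μ k ↑S = 0)
    (N : Fin K → ℕ) (hN : ∀ k, d < N k) :
    (Measure.pi fun k => Measure.pi fun _ : Fin (N k) => μ k)
      {ω : (k : Fin K) → Fin (N k) → (Fin D → ℝ) |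
        ∀ π : ((k : Fin K) × Fin (N k)) → Fin K,
          (¬ ∀ s t, π s = π t ↔ s.1 = t.1) →
          (∑ j : Fin K, (Module.finrank ℝ
              (Submodule.span ℝ {x | ∃ s : (k : Fin K) × Fin (N k), s.1 = j ∧ ω s.1 s.2 = x}) : ℝ) ^ p) ^ (1 / p)
          < (∑ j : Fin K, (Module.finrank ℝ
              (Submodule.span ℝ {x | ∃ s : (k : Fin K) × Fin (N k), π s = j ∧ ω s.1 s.2 = x}) : ℝ) ^ p) ^ (1 / p)}
      = 1 := by
  have hd0 : (0 : ℝ) < d := by exact_mod_cast hd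
  have hp0 : 0 < p := (div_nonneg (Real.log_natCast_nonneg K)
    (sub_nonneg.2 (Real.log_le_log hd0 (by linarith)))).trans_lt hp
  have hclass (k : Fin K) :
      d < (Finset.univ.filter fun s : (k : Fin K) × Fin (N k) => s.1 = k).card := by
    rw [card_filter_sigma_fst_eq, Fintype.card_fin]
    exact hN k
  have hgen : ∀ᵐ ω ∂(Measure.pi fun k => Measure.pi fun _ : Fin (N k) => μ k),
      GeneralPosition (fun s : (k : Fin K) × Fin (N k) => L s.1) (fun s => ω s.1 s.2) :=
    (measurePreserving_piCurry_symm fun k (_ : Fin (N k)) => μ k).quasiMeasurePreserving.ae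
      (ae_generalPosition (fun s => hsupp s.1) (fun s => hnd s.1))
  refine (measure_congr (ae_eq_univ.2 (mem_ae_iff.1 ?_))).trans measure_univ
  filter_upwards [hgen] with ω hω π hπ
  obtain ⟨s, t, hst, hc, hbig⟩ := exists_large_mixed_fiber hclass hπ
  have hnat (j : Fin K) : Module.finrank ℝ
      (Submodule.span ℝ {x | ∃ s : (k : Fin K) × Fin (N k), s.1 = j ∧ ω s.1 s.2 = x}) = d :=
    (congrArg (fun U : Submodule ℝ (Fin D → ℝ) => Module.finrank ℝ U)
      (hω.span_image_fiber_eq (hLd j) (hclass j))).trans (hLd j)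
  have hmixed := hω.lt_finrank_span_image hLinj hLd hclass hbig ((Finset.mem_filter_univ _).2 rfl)
    ((Finset.mem_filter_univ _).2 hst.symm) hc
  rw [Finset.coe_filter_univ] at hmixed
  refine sum_rpow_rpow_inv_lt hp0 (fun _ => Nat.cast_nonneg _) (fun _ => Nat.cast_nonneg _)
    (j₀ := π s) ?_
  simp only [hnat, Finset.sum_const, Finset.card_univ, Fintype.card_fin, nsmul_eq_mul]
  calc (K : ℝ) * (d : ℝ) ^ p < ((d : ℝ) + 1) ^ p :=
      mul_rpow_lt_add_one_rpow (by positivity) hd0 hp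
    _ ≤ _ := Real.rpow_le_rpow (by positivity) (by exact_mod_cast hmixed) hp0.le

/-- Theorem 2 of the paper: if p > ln K / (ln(d+1) - ln d), then almost surely the
natural partition is the unique minimizer (among partitions into at most K sets,
uniqueness up to relabeling) of the global dimension defined via true dimensions. -/
theorem natural_partition_uniquely_minimizes_GD
    (D d K : ℕ) (hd : 1 ≤ d) (hdD : d < D) (hK : 1 ≤ K)
    (p : ℝ) (hp : p > Real.log K / (Real.log ((d : ℝ) + 1) - Real.log d))
    (L : Fin K → Submodule ℝ (Fin D → ℝ)) (hLinj : Function.Injective L)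
    (hLd : ∀ k, Module.finrank ℝ (L k) = d)
    (μ : Fin K → Measure (Fin D → ℝ)) [∀ k, IsProbabilityMeasure (μ k)]
    (hsupp : ∀ k, μ k (↑(L k))ᶜ = 0)
    (hnd : ∀ (k : Fin K) (S : Submodule ℝ (Fin D → ℝ)), S < L k → μ k ↑S = 0)
    (N : Fin K → ℕ) (hN : ∀ k, d < N k) :
    (Measure.pi fun k => Measure.pi fun _ : Fin (N k) => μ k)
      {ω : (k : Fin K) → Fin (N k) → (Fin D → ℝ) |
        ∀ π : ((k : Fin K) × Fin (N k)) → Fin K,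
          (¬ ∀ s t, π s = π t ↔ s.1 = t.1) →
          (∑ j : Fin K, (Module.finrank ℝ
              (Submodule.span ℝ {x | ∃ s : (k : Fin K) × Fin (N k), s.1 = j ∧ ω s.1 s.2 = x}) : ℝ) ^ p) ^ (1 / p)
          < (∑ j : Fin K, (Module.finrank ℝ
              (Submodule.span ℝ {x | ∃ s : (k : Fin K) × Fin (N k), π s = j ∧ ω s.1 s.2 = x}) : ℝ) ^ p) ^ (1 / p)}
      = 1 :=
  natural_partition_uniquely_minimizes_GD_general D d K hd p hp L hLinj hLd μ hsupp hnd N hN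
end

section
/- Let a data set of N points in ℝ^D consist of points from K distinct d-subspaces L₁,...,L_K with more than d points in each subspace, such that for each proper subset no d+1 of the points from any L_k lie in a proper subspace of L_k and no point of one subspace lies in the span of finitely many points from the others unless forced (general position assumption as in the paper's Lemma 2). If a partition Π of the data into at most K sets is not the natural partition and every set of Π spans a subspace of dimension at most d, then a contradiction arises; hence every non-natural partition has a set whose span has dimension at least d+1. -/
/-!
Suppose every set of `π` spans a space of dimension at most `d`. By general position, a set whose
points are linearly dependent contains a point `x s` in the span of the others, so that span
contains `L s.1`; having dimension at most `d`, it equals `L s.1`, and every point of the set comes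
from `L s.1`. Hence each set of `π` either has at most `d` points or lies inside one subspace. The
subspaces met by no set of the second kind are at least as many as the sets of the first kind, yet
their points, more than `d` per subspace, all lie in those sets of at most `d` points: so there are
no sets of the first kind. Every set then lies inside one subspace, and as there are at most `K`
sets, they are exactly the `K` subspaces.
-/

open Finset Function Module Submodule

theorem Function.FactorsThrough.eq_iff_eq_of_surjective {ι α β : Type*} [Finite β]
    {π : ι → β} {σ : ι → α} (hfac : σ.FactorsThrough π) (hσ : Surjective σ)
    (hcard : Nat.card β ≤ Nat.card α) (s t : ι) : π s = π t ↔ σ s = σ t := by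
  set g := extend π σ fun _ => σ s
  have hg : g ∘ π = σ := hfac.extend_comp _
  have hginj : g.Injective := ((hg ▸ hσ).of_comp.bijective_of_nat_card_le hcard).1
  refine ⟨fun h => hfac h, fun h => hginj ?_⟩
  rwa [← hg] at h

section Counting

variable {ι α β : Type*} [Fintype ι] [Fintype α] [Fintype β] [DecidableEq α] [DecidableEq β]
  {π : ι → β} {σ : ι → α} {d : ℕ}

theorem lt_card_fiber_of_card_fiber_le_or_const (hcard : Fintype.card β ≤ Fintype.card α)
    (hσ : ∀ a, d < #{s | σ s = a})
    (hπ : ∀ b, #{s | π s = b} ≤ d ∨ ∀ s, π s = b → ∀ t, π t = b → σ s = σ t) (b : β) :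
    d < #{s | π s = b} := by
  set small : Finset β := {b | #{s | π s = b} ≤ d}
  set covered : Finset α := image σ {s | π s ∉ small}
  have hcovered : #covered ≤ #smallᶜ := by
    refine card_le_card_of_forall_subsingleton (fun a b => ∃ s, σ s = a ∧ π s = b) ?_ ?_
    · intro a ha
      obtain ⟨s, hs, rfl⟩ := mem_image.1 ha
      exact ⟨π s, by simpa using hs, s, rfl, rfl⟩
    · rintro b hb _ ⟨-, s, rfl, hs⟩ _ ⟨-, t, rfl, ht⟩
      have hb' : d < #{s | π s = b} := by simpa [small] using hb
      exact (hπ b).resolve_left hb'.not_ge s hs t ht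
  have hcount : (d + 1) * #coveredᶜ ≤ d * #small :=
    calc (d + 1) * #coveredᶜ ≤ ∑ a ∈ coveredᶜ, #{s | σ s = a} := by
          rw [mul_comm, ← smul_eq_mul, ← sum_const]
          exact sum_le_sum fun a _ => hσ a
      _ = #{s | σ s ∈ coveredᶜ} := sum_card_fiberwise_eq_card_filter _ _ _
      _ ≤ #{s | π s ∈ small} := by
          refine card_le_card fun s => ?_
          simp only [mem_filter, mem_univ, true_and, mem_compl]
          intro hs
          by_contra h
          exact hs (mem_image.2 ⟨s, by simpa using h, rfl⟩)
      _ = ∑ b ∈ small, #{s | π s = b} := (sum_card_fiberwise_eq_card_filter _ _ _).symm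
      _ ≤ d * #small := by
          rw [mul_comm, ← smul_eq_mul, ← sum_const]
          exact sum_le_sum fun b hb => by simpa [small] using hb
  have hsmall : #small ≤ #coveredᶜ := by
    rw [card_compl] at hcovered ⊢
    have := card_le_univ small
    omega
  have hempty : #small = 0 := by nlinarith
  have : b ∉ small := by simp [card_eq_zero.1 hempty]
  simpa [small] using this

theorem eq_iff_eq_of_card_fiber_le_or_const (hcard : Fintype.card β ≤ Fintype.card α)
    (hσ : ∀ a, d < #{s | σ s = a})
    (hπ : ∀ b, #{s | π s = b} ≤ d ∨ ∀ s, π s = b → ∀ t, π t = b → σ s = σ t) (s t : ι) :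
    π s = π t ↔ σ s = σ t := by
  have hfac : σ.FactorsThrough π := fun s t h =>
    (hπ (π s)).resolve_left (lt_card_fiber_of_card_fiber_le_or_const hcard hσ hπ _).not_ge
      s rfl t h.symm
  have hσsurj : Surjective σ := fun a => by
    obtain ⟨s, hs⟩ := card_pos.1 (Nat.zero_lt_of_lt (hσ a))
    exact ⟨s, (mem_filter.1 hs).2⟩
  exact hfac.eq_iff_eq_of_surjective hσsurj (by simpa only [Nat.card_eq_fintype_card]) s t

end Counting

theorem card_filter_fst_eq {κ : Type*} [Fintype κ] [DecidableEq κ] (N : κ → ℕ) (k : κ) :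
    #{s : (k : κ) × Fin (N k) | s.1 = k} = N k := by
  have : ({s | s.1 = k} : Finset ((k : κ) × Fin (N k))) = univ.map (.sigmaMk k) := by
    ext ⟨k', i⟩
    aesop
  rw [this, card_map, card_univ, Fintype.card_fin]

section GeneralPosition

variable {F V ι κ : Type*} [DivisionRing F] [AddCommGroup V] [Module F V] {x : ι → V}

theorem LinearIndepOn.finrank_span_image_finset {T : Finset ι}
    (h : LinearIndepOn F x (T : Set ι)) : finrank F (span F (x '' T)) = #T := by
  rw [Set.image_eq_range, finrank_span_eq_card h]
  exact Fintype.card_coe T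

variable [FiniteDimensional F V] {L : κ → Submodule F V} {σ : ι → κ} {d : ℕ}

theorem LinearIndepOn.span_image_finset_eq {W : Submodule F V} {T : Finset ι}
    (h : LinearIndepOn F x (T : Set ι)) (hxW : ∀ i ∈ T, x i ∈ W) (hcard : finrank F W ≤ #T) :
    span F (x '' T) = W :=
  eq_of_le_of_finrank_le (span_le.2 <| Set.image_subset_iff.2 hxW)
    (by rwa [h.finrank_span_image_finset])

theorem exists_finset_fiber_span_eq {N : κ → ℕ} {x : (k : κ) × Fin (N k) → V} (k : κ)
    (hLd : finrank F (L k) = d) (hN : d ≤ N k) (hxL : ∀ i, x ⟨k, i⟩ ∈ L k)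
    (hindep : ∀ T : Finset (Fin (N k)), #T ≤ d → LinearIndependent F (fun i : T => x ⟨k, i.1⟩)) :
    ∃ Q : Finset ((k : κ) × Fin (N k)), (∀ s ∈ Q, s.1 = k) ∧ span F (x '' Q) = L k := by
  obtain ⟨T, -, hT⟩ := exists_subset_card_eq (s := (univ : Finset (Fin (N k)))) (by simpa using hN)
  refine ⟨T.map (.sigmaMk k), by simp, ?_⟩
  rw [coe_map, Set.image_image]
  exact LinearIndepOn.span_image_finset_eq (hindep T hT.le) (fun i _ => hxL i) (by rw [hLd, hT])

variable (hgen : ∀ s (Q : Finset ι), s ∉ Q → ¬ L (σ s) ≤ span F (x '' Q) → x s ∉ span F (x '' Q))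
include hgen

theorem label_eq_of_mem_of_span_eq (hLinj : Injective L) (hLd : ∀ k, finrank F (L k) = d)
    {k : κ} {Q : Finset ι} (hQ : ∀ t ∈ Q, σ t = k) (hspan : span F (x '' Q) = L k)
    {s : ι} (hs : x s ∈ L k) : σ s = k := by
  by_contra hsk
  have hle : L (σ s) ≤ L k := by
    rw [← hspan] at hs ⊢
    exact not_not.1 fun h => hgen s Q (fun hsQ => hsk (hQ s hsQ)) h hs
  exact hsk (hLinj (eq_of_le_of_finrank_le hle (by rw [hLd, hLd])))

theorem card_le_or_label_eq_of_finrank_span_le (hLd : ∀ k, finrank F (L k) = d)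
    (hlabel : ∀ s k, x s ∈ L k → σ s = k) {Q : Finset ι}
    (hQ : finrank F (span F (x '' Q)) ≤ d) :
    #Q ≤ d ∨ ∀ s ∈ Q, ∀ t ∈ Q, σ s = σ t := by
  classical
  by_cases hind : LinearIndepOn F x (Q : Set ι)
  · exact .inl (hind.finrank_span_image_finset ▸ hQ)
  right
  obtain ⟨s, hsQ, hs⟩ : ∃ s ∈ Q, x s ∈ span F (x '' (Q.erase s)) := by
    simpa [linearIndepOn_iff_notMem_span] using hind
  have hLs : L (σ s) = span F (x '' Q) := by
    refine eq_of_le_of_finrank_le ?_ (by rwa [hLd])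
    refine (not_not.1 fun h => hgen s _ (notMem_erase s Q) h hs).trans ?_
    exact span_mono (Set.image_mono (coe_subset.2 (erase_subset s Q)))
  have hQs : ∀ t ∈ Q, σ t = σ s := fun t ht =>
    hlabel t _ (hLs ▸ subset_span (Set.mem_image_of_mem x ht))
  intro t ht u hu
  rw [hQs t ht, hQs u hu]

end GeneralPosition

theorem non_natural_partition_has_big_set_general
    (D d K : ℕ)
    (L : Fin K → Submodule ℝ (Fin D → ℝ)) (hLinj : Function.Injective L)
    (hLd : ∀ k, Module.finrank ℝ (L k) = d)
    (N : Fin K → ℕ) (hN : ∀ k, d < N k)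
    (x : ((k : Fin K) × Fin (N k)) → (Fin D → ℝ))
    (hxL : ∀ s, x s ∈ L s.1)
    (hindep : ∀ (k : Fin K) (T : Finset (Fin (N k))), T.card ≤ d →
      LinearIndependent ℝ (fun i : T => x ⟨k, i.1⟩))
    (hgen : ∀ (s : (k : Fin K) × Fin (N k)) (Q : Finset ((k : Fin K) × Fin (N k))),
      s ∉ Q → ¬ (L s.1 ≤ Submodule.span ℝ (x '' ↑Q)) →
      x s ∉ Submodule.span ℝ (x '' ↑Q))
    (π : ((k : Fin K) × Fin (N k)) → Fin K)
    (hπ : ¬ ∀ s t, π s = π t ↔ s.1 = t.1) :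
    ∃ j : Fin K, d + 1 ≤ Module.finrank ℝ
      (Submodule.span ℝ (x '' {s | π s = j})) := by
  classical
  by_contra! hsmall
  have hlabel : ∀ s k, x s ∈ L k → s.1 = k := fun s k hs => by
    obtain ⟨Q, hQ, hspan⟩ :=
      exists_finset_fiber_span_eq k (hLd k) (hN k).le (fun i => hxL ⟨k, i⟩) (hindep k)
    exact label_eq_of_mem_of_span_eq (σ := Sigma.fst) hgen hLinj hLd hQ hspan hs
  refine hπ (eq_iff_eq_of_card_fiber_le_or_const le_rfl
    (fun k => (card_filter_fst_eq N k).symm ▸ hN k) fun j => ?_)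
  have hj : finrank ℝ (span ℝ (x '' ↑({s | π s = j} : Finset _))) ≤ d := by
    rw [coe_filter_univ]
    exact Nat.lt_succ_iff.1 (hsmall j)
  simpa using card_le_or_label_eq_of_finrank_span_le (σ := Sigma.fst) hgen hLd hlabel hj

/-- Main Lemma of the paper (deterministic form): under general position, every
non-natural partition of the data into at most K sets contains a set whose span has
dimension at least d+1. -/
theorem non_natural_partition_has_big_set
    (D d K : ℕ) (hd : 1 ≤ d) (hK : 1 ≤ K)
    (L : Fin K → Submodule ℝ (Fin D → ℝ)) (hLinj : Function.Injective L)
    (hLd : ∀ k, Module.finrank ℝ (L k) = d)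
    (N : Fin K → ℕ) (hN : ∀ k, d < N k)
    (x : ((k : Fin K) × Fin (N k)) → (Fin D → ℝ))
    (hxL : ∀ s, x s ∈ L s.1) (hxinj : Function.Injective x)
    (hindep : ∀ (k : Fin K) (T : Finset (Fin (N k))), T.card ≤ d →
      LinearIndependent ℝ (fun i : T => x ⟨k, i.1⟩))
    (hgen : ∀ (s : (k : Fin K) × Fin (N k)) (Q : Finset ((k : Fin K) × Fin (N k))),
      s ∉ Q → ¬ (L s.1 ≤ Submodule.span ℝ (x '' ↑Q)) →
      x s ∉ Submodule.span ℝ (x '' ↑Q))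
    (π : ((k : Fin K) × Fin (N k)) → Fin K)
    (hπ : ¬ ∀ s t, π s = π t ↔ s.1 = t.1) :
    ∃ j : Fin K, d + 1 ≤ Module.finrank ℝ
      (Submodule.span ℝ (x '' {s | π s = j})) :=
  non_natural_partition_has_big_set_general D d K L hLinj hLd N hN x hxL hindep hgen π hπ
end
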